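/- Let n be a squarefree integer with exactly m ≥ 1 distinct prime factors and l ≥ 1. Then the number of ordered l-colored factorizations of n into parts ≥ 2 equals Σ_{k=1}^{m} l^k · k! · S(m, k), and this also equals the number of ordered l-colored distinct factorizations of n. -/

import Mathlib

/-- `tA l n`: number of ordered factorizations of `n` into parts `≥ 2`
of at most `l` colors (finite sequences of (value, color) pairs). -/
noncomputable def tA (l n : ℕ) : ℕ :=
  Set.ncard {L : List (ℕ × ℕ) |
    (∀ p ∈ L, 2 ≤ p.1 ∧ p.2 < l) ∧ (L.map Prod.fst).prod = n}

/-- `tB l n`: number of ordered distinct factorizations of `n` into parts `≥ 2`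
of at most `l` colors (sequences of pairwise distinct (value, color) pairs). -/
noncomputable def tB (l n : ℕ) : ℕ :=
  Set.ncard {L : List (ℕ × ℕ) | L.Nodup ∧
    (∀ p ∈ L, 2 ≤ p.1 ∧ p.2 < l) ∧ (L.map Prod.fst).prod = n}

/-- Stirling numbers of the second kind. -/
def stirling2 : ℕ → ℕ → ℕ
  | 0, 0 => 1
  | 0, _ + 1 => 0
  | _ + 1, 0 => 0
  | n + 1, k + 1 => (k + 1) * stirling2 n (k + 1) + stirling2 n k


/-!
Splitting off the first (colored) factor `n / d`, where `d` is the product of the remaining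
parts, gives `f(n) = l · ∑_{d ∣ n, d < n} f(d)` for the number `f(n)` of ordered `l`-colored
factorizations of `n > 1`. For squarefree `n` the proper divisors correspond to the proper subsets
of its `m` prime factors, so `f(n) = b(m)` where `b(0) = 1` and `b(m) = l · ∑_{i < m} C(m, i) b(i)`.
Since `k! S(m, k)` counts surjections onto `k` points, `∑ₖ lᵏ k! S(m, k)` obeys the same recursion.
Finally, a repeated part `a ≥ 2` would make `a²` divide `n`, so for squarefree `n` every
factorization is distinct.
-/

open Finset Nat

theorem stirling2_eq_stirlingSecond : ∀ m k, stirling2 m k = stirlingSecond m k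
  | 0, 0 | 0, _ + 1 | _ + 1, 0 => rfl
  | m + 1, k + 1 => by
    rw [stirling2, stirlingSecond_succ_succ, stirling2_eq_stirlingSecond m (k + 1),
      stirling2_eq_stirlingSecond m k]

theorem factorial_mul_stirlingSecond_succ_succ (n k : ℕ) :
    (k + 1)! * stirlingSecond (n + 1) (k + 1) =
      (k + 1) * ((k + 1)! * stirlingSecond n (k + 1) + k ! * stirlingSecond n k) := by
  rw [stirlingSecond_succ_succ, factorial_succ]
  ring

/-- Count the surjections `[n] → [k + 1]` by the set of `i` points not sent to the last one. -/
theorem factorial_mul_stirlingSecond_succ_right (n k : ℕ) :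
    (k + 1)! * stirlingSecond n (k + 1) =
      ∑ i ∈ range n, n.choose i * (k ! * stirlingSecond i k) := by
  induction n generalizing k with
  | zero => simp
  | succ n ih =>
    have shifted : ∑ i ∈ range n, n.choose i * (k ! * stirlingSecond (i + 1) k) =
        k * ((k + 1)! * stirlingSecond n (k + 1) + k ! * stirlingSecond n k) := by
      cases k with
      | zero => simp
      | succ k =>
        simp_rw [factorial_mul_stirlingSecond_succ_succ, mul_left_comm _ (k + 1), ← mul_sum,
          mul_add, sum_add_distrib, ← ih, mul_add]
    have unshifted := sum_range_succ' (fun i => n.choose i * (k ! * stirlingSecond i k)) n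
    rw [sum_range_succ, ← ih, choose_self, choose_zero_right] at unshifted
    rw [sum_range_succ', choose_zero_right]
    simp_rw [choose_succ_succ, add_mul]
    rw [sum_add_distrib, shifted, add_assoc, ← unshifted, factorial_mul_stirlingSecond_succ_succ]
    ring

/-- The `k = 0` term makes `coloredFubini l 0 = 1`, the count of the empty factorization. -/
def coloredFubini (l m : ℕ) : ℕ := ∑ k ∈ range (m + 1), l ^ k * k ! * stirlingSecond m k

theorem coloredFubini_zero (l : ℕ) : coloredFubini l 0 = 1 := by
  simp [coloredFubini]

theorem coloredFubini_eq_sum_range {l m N : ℕ} (hN : m < N) :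
    coloredFubini l m = ∑ k ∈ range N, l ^ k * k ! * stirlingSecond m k := by
  refine sum_subset (range_subset_range.2 hN) fun k hkN hkm => ?_
  rw [stirlingSecond_eq_zero_of_lt (by simpa using hkm), mul_zero]

theorem coloredFubini_eq_sum_Icc (l : ℕ) {m : ℕ} (hm : m ≠ 0) :
    coloredFubini l m = ∑ k ∈ Icc 1 m, l ^ k * k ! * stirlingSecond m k := by
  obtain ⟨m, rfl⟩ := exists_eq_add_one_of_ne_zero hm
  rw [coloredFubini, range_eq_Ico, sum_eq_sum_Ico_succ_bot (succ_pos _)]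
  simp [Ico_add_one_right_eq_Icc]

theorem coloredFubini_of_ne_zero (l : ℕ) {m : ℕ} (hm : m ≠ 0) :
    coloredFubini l m = l * ∑ i ∈ range m, m.choose i * coloredFubini l i := by
  calc coloredFubini l m
      = ∑ k ∈ range m, l ^ (k + 1) * ((k + 1)! * stirlingSecond m (k + 1)) := by
        obtain ⟨m, rfl⟩ := exists_eq_add_one_of_ne_zero hm
        simp [coloredFubini, sum_range_succ' _ (m + 1), mul_assoc]
    _ = l * ∑ i ∈ range m, m.choose i * ∑ k ∈ range m, l ^ k * k ! * stirlingSecond i k := by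
        simp_rw [factorial_mul_stirlingSecond_succ_right, mul_sum]
        rw [sum_comm]
        refine sum_congr rfl fun i _ => sum_congr rfl fun k _ => by ring
    _ = l * ∑ i ∈ range m, m.choose i * coloredFubini l i := by
        congr 1
        refine sum_congr rfl fun i hi => ?_
        rw [coloredFubini_eq_sum_range (mem_range.1 hi)]

theorem Squarefree.sum_divisors_eq_sum_powerset {M : Type*} [AddCommMonoid M] {n : ℕ}
    (hn : Squarefree n) (f : ℕ → M) :
    ∑ d ∈ n.divisors, f d = ∑ s ∈ n.primeFactors.powerset, f (∏ p ∈ s, p) := by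
  rw [← divisors_filter_squarefree_of_squarefree hn, sum_divisors_filter_squarefree hn.ne_zero,
    factors_eq, ← toFinset_factors]
  simp [prod_val]

theorem Squarefree.sum_properDivisors_card_primeFactors {M : Type*} [AddCancelCommMonoid M]
    {n : ℕ} (hn : Squarefree n) (g : ℕ → M) :
    ∑ d ∈ n.properDivisors, g #d.primeFactors =
      ∑ i ∈ range #n.primeFactors, (#n.primeFactors).choose i • g i := by
  have hdiv : ∑ d ∈ n.divisors, g #d.primeFactors =
      ∑ i ∈ range (#n.primeFactors + 1), (#n.primeFactors).choose i • g i := by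
    rw [hn.sum_divisors_eq_sum_powerset, ← sum_powerset_apply_card]
    refine sum_congr rfl fun s hs => ?_
    rw [primeFactors_prod fun p hp => prime_of_mem_primeFactors (mem_powerset.1 hs hp)]
  rw [← cons_self_properDivisors hn.ne_zero, sum_cons, sum_range_succ, choose_self, one_smul,
    add_comm] at hdiv
  exact add_right_cancel hdiv

def factorizations (l n : ℕ) : Set (List (ℕ × ℕ)) :=
  {L | (∀ p ∈ L, 2 ≤ p.1 ∧ p.2 < l) ∧ (L.map Prod.fst).prod = n}

theorem factorizations_one (l : ℕ) : factorizations l 1 = {[]} := by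
  ext L
  cases L with
  | nil => simp [factorizations]
  | cons p L =>
    simp only [factorizations, Set.mem_ofPred_eq, List.mem_cons, forall_eq_or_imp, List.map_cons,
      List.prod_cons, mul_eq_one, Set.mem_singleton_iff, reduceCtorEq, iff_false]
    omega

theorem pos_of_mem_factorizations {l n : ℕ} {L : List (ℕ × ℕ)}
    (hL : L ∈ factorizations l n) : 0 < n := by
  rw [← hL.2]
  refine List.prod_pos fun a ha => ?_
  obtain ⟨p, hp, rfl⟩ := List.mem_map.1 ha
  have := (hL.1 p hp).1
  omega

theorem factorizations_eq_biUnion (l : ℕ) {n : ℕ} (hn : 1 < n) :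
    factorizations l n = ⋃ x ∈ (↑(n.properDivisors ×ˢ range l) : Set (ℕ × ℕ)),
      List.cons (n / x.1, x.2) '' factorizations l x.1 := by
  ext L
  simp only [Set.mem_iUnion, Set.mem_image, coe_product, Set.mem_prod, mem_coe, mem_properDivisors,
    mem_range, exists_prop, Prod.exists]
  constructor
  · rintro ⟨hL, hprod⟩
    cases L with
    | nil => simp at hprod; omega
    | cons p L =>
      have htail : L ∈ factorizations l (L.map Prod.fst).prod :=
        ⟨fun q hq => hL q (List.mem_cons_of_mem p hq), rfl⟩
      have hp := hL p List.mem_cons_self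
      rw [List.map_cons, List.prod_cons] at hprod
      have hd := pos_of_mem_factorizations htail
      refine ⟨_, p.2, ⟨⟨Dvd.intro_left _ hprod, ?_⟩, hp.2⟩, L, htail, ?_⟩
      · rw [← hprod]
        exact lt_mul_left hd hp.1
      · rw [← hprod, Nat.mul_div_cancel _ hd]
  · rintro ⟨d, c, ⟨⟨⟨k, rfl⟩, hd⟩, hc⟩, L, ⟨hL, hprod⟩, rfl⟩
    have hd0 : 0 < d := by nlinarith
    have h2 : 2 ≤ d * k / d := by
      rw [Nat.mul_div_cancel_left _ hd0]
      nlinarith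
    refine ⟨?_, ?_⟩
    · simpa [h2, hc] using hL
    · simp [hprod, Nat.div_mul_cancel (Dvd.intro k rfl)]

theorem encard_factorizations (l : ℕ) {n : ℕ} (hn : 1 < n) :
    (factorizations l n).encard = l * ∑ d ∈ n.properDivisors, (factorizations l d).encard := by
  rw [factorizations_eq_biUnion l hn, Set.Finite.encard_biUnion (finite_toSet _),
    finsum_mem_coe_finset, sum_product]
  · simp [(List.cons_injective).encard_image, mul_sum]
  · rintro ⟨d, c⟩ - ⟨d', c'⟩ - hne
    refine Set.disjoint_left.2 ?_
    rintro - ⟨L, hL, rfl⟩ ⟨L', hL', heq⟩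
    simp only [List.cons.injEq, Prod.mk.injEq] at heq
    obtain ⟨⟨-, rfl⟩, rfl⟩ := heq
    exact hne (congrArg (·, c') (hL.2.symm.trans hL'.2))

theorem encard_factorizations_of_squarefree (l : ℕ) {n : ℕ} (hn : Squarefree n) :
    (factorizations l n).encard = coloredFubini l #n.primeFactors := by
  induction n using Nat.strong_induction_on with
  | _ n ih =>
    rcases (one_le_iff_ne_zero.2 hn.ne_zero).eq_or_lt with rfl | hn1
    · simp [factorizations_one, coloredFubini_zero]
    have hsum : ∑ d ∈ n.properDivisors, (factorizations l d).encard =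
        ↑(∑ d ∈ n.properDivisors, coloredFubini l #d.primeFactors) := by
      push_cast
      refine sum_congr rfl fun d hd => ?_
      obtain ⟨hdvd, hlt⟩ := mem_properDivisors.1 hd
      exact ih d hlt (hn.squarefree_of_dvd hdvd)
    rw [encard_factorizations l hn1, hsum, hn.sum_properDivisors_card_primeFactors,
      coloredFubini_of_ne_zero l (card_ne_zero.2 (nonempty_primeFactors.2 hn1))]
    simp

theorem Squarefree.nodup_of_mem_factorizations {l n : ℕ} {L : List (ℕ × ℕ)} (hn : Squarefree n)
    (hL : L ∈ factorizations l n) : L.Nodup := by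
  refine List.Nodup.of_map Prod.fst (List.nodup_iff_sublist.2 fun a ha => ?_)
  have hunit := hn a (by simpa [hL.2] using ha.prod_dvd_prod)
  obtain ⟨p, hp, rfl⟩ := List.mem_map.1 (ha.subset List.mem_cons_self)
  have := (hL.1 p hp).1
  simp only [isUnit_iff_eq_one] at hunit
  omega

theorem tA_tB_squarefree_general (l m n : ℕ) (hm : 1 ≤ m)
    (hn : Squarefree n) (hcard : n.primeFactors.card = m) :
    tA l n = ∑ k ∈ Finset.Icc 1 m, l ^ k * k.factorial * stirling2 m k ∧
    tB l n = ∑ k ∈ Finset.Icc 1 m, l ^ k * k.factorial * stirling2 m k := by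
  have hA : tA l n = coloredFubini l m := by
    rw [tA, Set.ncard_def, ← factorizations, encard_factorizations_of_squarefree l hn, hcard,
      ENat.toNat_natCast]
  have hB : tB l n = tA l n := by
    rw [tB, tA]
    congr 1
    ext L
    exact and_iff_right_of_imp hn.nodup_of_mem_factorizations
  have hsum : coloredFubini l m = ∑ k ∈ Icc 1 m, l ^ k * k ! * stirling2 m k := by
    simp_rw [coloredFubini_eq_sum_Icc l (one_le_iff_ne_zero.1 hm), stirling2_eq_stirlingSecond]
  exact ⟨hA.trans hsum, hB.trans (hA.trans hsum)⟩

theorem tA_tB_squarefree (l m n : ℕ) (hl : 1 ≤ l) (hm : 1 ≤ m)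
    (hn : Squarefree n) (hcard : n.primeFactors.card = m) :
    tA l n = ∑ k ∈ Finset.Icc 1 m, l ^ k * k.factorial * stirling2 m k ∧
    tB l n = ∑ k ∈ Finset.Icc 1 m, l ^ k * k.factorial * stirling2 m k :=
  tA_tB_squarefree_general l m n hm hn hcard
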